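/- arXiv:1104.4999 — 5 statements merged into one kernel-verified Lean document; each statement's English description precedes it below -/
import Mathlib

section
/- Let C ∈ M_ℓ(ℂ) be Hermitian positive definite and let 𝒜 be the set of all A ∈ M_ℓ(ℂ) with det A = 1. Then inf_{A ∈ 𝒜} (1/ℓ)·tr(A C A†) = (det C)^{1/ℓ}, where for each A ∈ 𝒜 the trace tr(A C A†) is a positive real number and det C is a positive real number; moreover the infimum is attained. -/
open Matrix
open scoped ComplexOrder

/-!
For `det A = 1` the matrix `M = A C Aᴴ` is positive definite with `det M = det C`, so AM-GM on
its eigenvalues gives `(det C)^(1/ℓ) ≤ tr M / ℓ`. Equality holds for `A = t • (√C)⁻¹` with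
`t ^ ℓ = det √C`, which turns `A C Aᴴ` into a scalar matrix.
-/

namespace Matrix

variable {n 𝕜 : Type*} [Fintype n] [DecidableEq n] [RCLike 𝕜]

theorem PosSemidef.re_det_rpow_le_re_trace_div [Nonempty n] {M : Matrix n n 𝕜}
    (hM : M.PosSemidef) :
    RCLike.re M.det ^ (Fintype.card n : ℝ)⁻¹ ≤ RCLike.re M.trace / Fintype.card n := by
  have amgm := Real.geom_mean_le_arith_mean Finset.univ (fun _ ↦ 1) hM.1.eigenvalues
    (fun _ _ ↦ zero_le_one) (by simp [Fintype.card_pos]) (fun i _ ↦ hM.eigenvalues_nonneg i)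
  rw [hM.1.det_eq_prod_eigenvalues, hM.1.trace_eq_sum_eigenvalues]
  simp only [← RCLike.ofReal_prod, ← RCLike.ofReal_sum, RCLike.ofReal_re]
  simpa using amgm

open scoped MatrixOrder in
theorem PosDef.exists_det_eq_one_mul_mul_conjTranspose_eq [Nonempty n] {C : Matrix n n 𝕜}
    (hC : C.PosDef) :
    ∃ A : Matrix n n 𝕜, A.det = 1 ∧
      A * C * Aᴴ = ((RCLike.re C.det ^ (Fintype.card n : ℝ)⁻¹ : ℝ) : 𝕜) • 1 := by
  have hc : 0 < RCLike.re C.det := (RCLike.pos_iff.mp hC.det_pos).1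
  set S := CFC.sqrt C
  have hSS : S * S = C := CFC.sqrt_mul_sqrt_self C hC.posSemidef.nonneg
  have hSH : Sᴴ = S := (CFC.sqrt_nonneg C).posSemidef.isHermitian
  have hdetS : S.det = (√(RCLike.re C.det) : ℝ) := by
    rw [hC.posSemidef.det_sqrt, RCLike.sqrt_of_nonneg hC.posSemidef.det_nonneg]
  have hS : IsUnit S.det := by
    rw [hdetS, isUnit_iff_ne_zero, RCLike.ofReal_ne_zero]
    positivity
  set t : ℝ := √(RCLike.re C.det) ^ (Fintype.card n : ℝ)⁻¹
  have ht_pow : t ^ Fintype.card n = √(RCLike.re C.det) :=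
    Real.rpow_inv_natCast_pow (Real.sqrt_nonneg _) Fintype.card_ne_zero
  have ht_sq : t * t = RCLike.re C.det ^ (Fintype.card n : ℝ)⁻¹ := by
    rw [← Real.mul_rpow (Real.sqrt_nonneg _) (Real.sqrt_nonneg _), Real.mul_self_sqrt hc.le]
  refine ⟨(t : 𝕜) • S⁻¹, ?_, ?_⟩
  · rw [det_smul, det_nonsing_inv, hdetS, Ring.inverse_eq_inv, ← RCLike.ofReal_pow, ht_pow]
    exact mul_inv_cancel₀ (by rwa [← hdetS, ← isUnit_iff_ne_zero])
  · rw [conjTranspose_smul, conjTranspose_nonsing_inv, hSH, RCLike.star_def, RCLike.conj_ofReal,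
      smul_mul, smul_mul_smul_comm, ← ht_sq, RCLike.ofReal_mul, ← hSS]
    congr 1
    rw [← mul_assoc, nonsing_inv_mul _ hS, one_mul, mul_nonsing_inv _ hS]

end Matrix

/-- For a Hermitian positive definite `C`, the infimum of `(1/ℓ)·tr(A C A†)` over
all matrices `A` with `det A = 1` equals `(det C)^(1/ℓ)`, and it is attained;
moreover each `tr(A C A†)` and `det C` are positive real numbers. -/
theorem inf_trace_eq_det_rpow {ℓ : ℕ} (hℓ : 0 < ℓ)
    (C : Matrix (Fin ℓ) (Fin ℓ) ℂ) (hC : C.PosDef) :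
    (0 < C.det.re ∧ C.det.im = 0) ∧
    (∀ A : Matrix (Fin ℓ) (Fin ℓ) ℂ, A.det = 1 →
        0 < (A * C * Aᴴ).trace.re ∧ (A * C * Aᴴ).trace.im = 0) ∧
    IsLeast {x : ℝ | ∃ A : Matrix (Fin ℓ) (Fin ℓ) ℂ,
        A.det = 1 ∧ x = (1 / (ℓ : ℝ)) * (A * C * Aᴴ).trace.re}
      (C.det.re ^ ((1 : ℝ) / (ℓ : ℝ))) := by
  have : Nonempty (Fin ℓ) := Fin.pos_iff_nonempty.mp hℓ
  have hconj (A : Matrix (Fin ℓ) (Fin ℓ) ℂ) (hA : A.det = 1) :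
      (A * C * Aᴴ).PosDef ∧ (A * C * Aᴴ).det = C.det := by
    refine ⟨hC.mul_mul_conjTranspose_same (vecMul_injective_iff_isUnit.mpr ?_), ?_⟩
    · simp [isUnit_iff_isUnit_det, hA]
    · simp [det_conjTranspose, hA]
  refine ⟨(Complex.pos_iff.mp hC.det_pos).imp_right Eq.symm,
    fun A hA ↦ (Complex.pos_iff.mp (hconj A hA).1.trace_pos).imp_right Eq.symm, ?_, ?_⟩
  · obtain ⟨A, hA, hACA⟩ := hC.exists_det_eq_one_mul_mul_conjTranspose_eq
    refine ⟨A, hA, ?_⟩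
    rw [hACA, trace_smul, trace_one]
    field_simp
    simp [mul_comm]
  · rintro x ⟨A, hA, rfl⟩
    have hamgm := (hconj A hA).1.posSemidef.re_det_rpow_le_re_trace_div
    rw [(hconj A hA).2] at hamgm
    simpa [one_div, div_eq_inv_mul] using hamgm
end

section
/- Let A, B ∈ M_ℓ(ℂ) be Hermitian positive definite and let λ ∈ (0,1). Then λ·log A + (1−λ)·log B ⪯ log(λA + (1−λ)B); that is, the logarithm is operator concave on positive definite matrices. -/
open scoped ComplexOrder

/-- The logarithm of a Hermitian matrix, defined through the spectral theorem. -/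
noncomputable def matLog {ℓ : ℕ} {A : Matrix (Fin ℓ) (Fin ℓ) ℂ}
    (hA : A.IsHermitian) : Matrix (Fin ℓ) (Fin ℓ) ℂ :=
  (hA.eigenvectorUnitary : Matrix (Fin ℓ) (Fin ℓ) ℂ) *
    Matrix.diagonal (fun i => (Real.log (hA.eigenvalues i) : ℂ)) *
    star (hA.eigenvectorUnitary : Matrix (Fin ℓ) (Fin ℓ) ℂ)

-- The operator norm makes matrices a C⋆-algebra and `MatrixOrder` is the Loewner order, so the
-- operator concavity of `CFC.log` (Mathlib) applies.
open scoped Matrix.Norms.L2Operator MatrixOrder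

theorem matLog_eq_log {ℓ : ℕ} {A : Matrix (Fin ℓ) (Fin ℓ) ℂ} (hA : A.IsHermitian) :
    matLog hA = CFC.log A := by
  rw [CFC.log, hA.cfc_eq, Matrix.IsHermitian.cfc, Unitary.conjStarAlgAut_apply, matLog]
  rfl

/-- The logarithm is operator concave on positive definite matrices:
`λ·log A + (1-λ)·log B ⪯ log (λA + (1-λ)B)` for `λ ∈ (0,1)`. -/
theorem matLog_operator_concave {ℓ : ℕ}
    (A B : Matrix (Fin ℓ) (Fin ℓ) ℂ)
    (hA : A.PosDef) (hB : B.PosDef)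
    (lam : ℝ) (h0 : 0 < lam) (h1 : lam < 1)
    (hC : ((lam : ℂ) • A + ((1 - lam : ℝ) : ℂ) • B).PosDef) :
    (matLog hC.1 - ((lam : ℂ) • matLog hA.1 + ((1 - lam : ℝ) : ℂ) • matLog hB.1)).PosSemidef := by
  have hconcave := CFC.concaveOn_log.2 hA.isStrictlyPositive hB.isStrictlyPositive
    h0.le (sub_nonneg.2 h1.le) (add_sub_cancel lam 1)
  rw [← Matrix.le_iff]
  simpa only [matLog_eq_log, Complex.coe_smul] using hconcave
end

section
/- (Matrix Jensen inequality for the logarithm.) Let f : [0,2π) → M_ℓ(ℂ) be a measurable function whose values are Hermitian positive definite matrices, such that f is entrywise integrable with respect to dθ/(2π) and θ ↦ log f(θ) is entrywise integrable with respect to dθ/(2π). Then the matrix F := ∫_0^{2π} f(θ) dθ/(2π) is Hermitian positive definite and ∫_0^{2π} log f(θ) dθ/(2π) ⪯ log F. -/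
/-!
The matrix logarithm has the integral representation
`log A = ∫₀^∞ ((1 + s)⁻¹ - (A + s)⁻¹) ds`, so concavity of `log` reduces to convexity of
the resolvent. For positive definite `X`, `Y` the inverse satisfies the tangent inequality
`Y⁻¹ - Y⁻¹ (X - Y) Y⁻¹ ⪯ X⁻¹`, the difference being `(X⁻¹ - Y⁻¹) X (X⁻¹ - Y⁻¹)`.
Applied to `X + s` and `Y + s` and integrated over `s`, it gives the supergradient inequality
`log X ⪯ log Y + D_Y (X - Y)` with `D_Y M = ∫₀^∞ (Y + s)⁻¹ M (Y + s)⁻¹ ds`, which is linear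
in `M`. Taking `X = f θ` and `Y = F` and averaging over `θ`, the linear term vanishes
because `f θ - F` averages to zero.
-/

open MeasureTheory
open scoped ComplexOrder

open Set Filter Real Topology
open scoped MatrixOrder

lemma integrableOn_inv_add_mul_inv_add {a b : ℝ} (ha : 0 < a) (hb : 0 < b) :
    IntegrableOn (fun s => (a + s)⁻¹ * (b + s)⁻¹) (Ioi 0) := by
  have hm : 0 < min a b := lt_min ha hb
  refine (integrableOn_add_rpow_Ioi_of_lt (a := -2) (by norm_num) (neg_neg_iff_pos.2 hm)).mono'
    (by fun_prop (disch := intro s hs; exact (add_pos (by assumption) hs).ne')) ?_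
  filter_upwards [ae_restrict_mem measurableSet_Ioi] with s (hs : 0 < s)
  rw [rpow_neg (by positivity), rpow_two, norm_of_nonneg (by positivity), ← inv_pow, sq,
    add_comm s]
  gcongr
  · exact min_le_left a b
  · exact min_le_right a b

lemma integrableOn_inv_one_add_sub_inv_add {x : ℝ} (hx : 0 < x) :
    IntegrableOn (fun s => (1 + s)⁻¹ - (x + s)⁻¹) (Ioi 0) := by
  refine IntegrableOn.congr_fun ((integrableOn_inv_add_mul_inv_add one_pos hx).const_mul (x - 1))
    (fun s (hs : 0 < s) => ?_) measurableSet_Ioi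
  field_simp
  ring

lemma integral_inv_one_add_sub_inv_add {x : ℝ} (hx : 0 < x) :
    ∫ s in Ioi 0, ((1 + s)⁻¹ - (x + s)⁻¹) = log x := by
  have hderiv (s : ℝ) (hs : s ∈ Ici 0) :
      HasDerivAt (fun s => log (1 + s) - log (x + s)) ((1 + s)⁻¹ - (x + s)⁻¹) s := by
    have hs : (0 : ℝ) ≤ s := hs
    simpa using ((((hasDerivAt_id s).const_add 1).log (by positivity)).fun_sub
      (((hasDerivAt_id s).const_add x).log (by positivity)) :)
  have hlim : Tendsto (fun s => log (1 + s) - log (x + s)) atTop (𝓝 0) := by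
    have hratio : Tendsto (fun s => (1 + s) / (x + s)) atTop (𝓝 1) := by
      have hinv : Tendsto (fun s => (x + s)⁻¹) atTop (𝓝 0) :=
        tendsto_inv_atTop_zero.comp (tendsto_atTop_add_const_left _ x tendsto_id)
      refine (by simpa using (hinv.const_mul (1 - x)).const_add 1 :
        Tendsto (fun s => 1 + (1 - x) * (x + s)⁻¹) atTop (𝓝 1)).congr' ?_
      filter_upwards [eventually_gt_atTop 0] with s hs
      field_simp
      ring
    refine ((continuousAt_log one_ne_zero).tendsto.comp hratio).congr' ?_ |>.trans (by simp)
    filter_upwards [eventually_gt_atTop 0] with s hs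
    simp [log_div (by positivity : 1 + s ≠ 0) (by positivity : x + s ≠ 0)]
  rw [integral_Ioi_of_hasDerivAt_of_tendsto' hderiv (integrableOn_inv_one_add_sub_inv_add hx) hlim]
  simp

lemma RCLike.integral_pos_of_forall_pos {α 𝕜 : Type*} [RCLike 𝕜] [MeasurableSpace α]
    {μ : Measure α} [NeZero μ] {f : α → 𝕜} (hf : Integrable f μ) (hpos : ∀ x, 0 < f x) :
    0 < ∫ x, f x ∂μ := by
  have hreal (x : α) : f x = (re (f x) : 𝕜) :=
    ext (by simp) (by simp [(pos_iff.1 (hpos x)).2])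
  have hre : 0 < ∫ x, re (f x) ∂μ := by
    refine (integral_pos_iff_support_of_nonneg (fun x => (pos_iff.1 (hpos x)).1.le)
      hf.re).2 ?_
    rw [Function.support_eq_univ fun x => (pos_iff.1 (hpos x)).1.ne']
    exact pos_iff_ne_zero.2 (Measure.measure_univ_ne_zero.2 (NeZero.ne μ))
  rw [integral_congr_ae (.of_forall hreal), integral_ofReal]
  exact_mod_cast hre

open ProbabilityTheory in
lemma MeasureTheory.IntegrableOn.integrable_cond {α E : Type*} [MeasurableSpace α]
    [NormedAddCommGroup E] {μ : Measure α} {s : Set α} {g : α → E} (hg : IntegrableOn g s μ)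
    (hs : μ s ≠ 0) : Integrable g μ[|s] :=
  hg.smul_measure (ENNReal.inv_ne_top.2 hs)

namespace Matrix

variable {α m n E 𝕜 : Type*} [MeasurableSpace α] {μ : Measure α}
  [NormedAddCommGroup E] [NormedSpace ℝ E] [RCLike 𝕜]

noncomputable def entrywiseIntegral (μ : Measure α) (g : α → Matrix m n E) : Matrix m n E :=
  of fun i j => ∫ x, g x i j ∂μ

@[simp] lemma entrywiseIntegral_apply (g : α → Matrix m n E) (i : m) (j : n) :
    entrywiseIntegral μ g i j = ∫ x, g x i j ∂μ := rfl

lemma entrywiseIntegral_add {g h : α → Matrix m n E}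
    (hg : ∀ i j, Integrable (fun x => g x i j) μ) (hh : ∀ i j, Integrable (fun x => h x i j) μ) :
    entrywiseIntegral μ (fun x => g x + h x) =
      entrywiseIntegral μ g + entrywiseIntegral μ h := by
  ext i j
  exact integral_add (hg i j) (hh i j)

lemma entrywiseIntegral_sub {g h : α → Matrix m n E}
    (hg : ∀ i j, Integrable (fun x => g x i j) μ) (hh : ∀ i j, Integrable (fun x => h x i j) μ) :
    entrywiseIntegral μ (fun x => g x - h x) =
      entrywiseIntegral μ g - entrywiseIntegral μ h := by
  ext i j
  exact integral_sub (hg i j) (hh i j)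

lemma entrywiseIntegral_const [CompleteSpace E] [IsProbabilityMeasure μ] (M : Matrix m n E) :
    entrywiseIntegral μ (fun _ => M) = M := by
  ext i j
  simp

open ProbabilityTheory in
lemma entrywiseIntegral_cond (s : Set α) (g : α → Matrix m n E) :
    entrywiseIntegral μ[|s] g = of fun i j => (μ.real s)⁻¹ • ∫ x in s, g x i j ∂μ := by
  ext i j
  simp [ProbabilityTheory.cond, integral_smul_measure, measureReal_def]

lemma isHermitian_entrywiseIntegral {g : α → Matrix n n 𝕜}
    (hg : ∀ᵐ x ∂μ, (g x).IsHermitian) : (entrywiseIntegral μ g).IsHermitian := by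
  refine IsHermitian.ext fun i j => ?_
  simp only [entrywiseIntegral_apply, RCLike.star_def, ← integral_conj]
  exact integral_congr_ae (hg.mono fun x hx => hx.apply i j)

section Fintype

variable [Fintype n]

lemma integrable_dotProduct_mulVec {g : α → Matrix n n 𝕜}
    (hg : ∀ i j, Integrable (fun x => g x i j) μ) (v : n → 𝕜) :
    Integrable (fun x => star v ⬝ᵥ g x *ᵥ v) μ := by
  simp only [dotProduct, mulVec, Finset.mul_sum]
  fun_prop

lemma dotProduct_entrywiseIntegral_mulVec {g : α → Matrix n n 𝕜}
    (hg : ∀ i j, Integrable (fun x => g x i j) μ) (v : n → 𝕜) :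
    star v ⬝ᵥ entrywiseIntegral μ g *ᵥ v = ∫ x, star v ⬝ᵥ g x *ᵥ v ∂μ := by
  simp only [dotProduct, mulVec, Finset.mul_sum]
  rw [integral_finsetSum _ fun i _ => by fun_prop]
  refine Finset.sum_congr rfl fun i _ => ?_
  rw [integral_finsetSum _ fun j _ => by fun_prop]
  refine Finset.sum_congr rfl fun j _ => ?_
  simp [integral_const_mul, integral_mul_const]

lemma posSemidef_entrywiseIntegral {g : α → Matrix n n 𝕜} (hg : ∀ᵐ x ∂μ, (g x).PosSemidef)
    (hint : ∀ i j, Integrable (fun x => g x i j) μ) :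
    (entrywiseIntegral μ g).PosSemidef := by
  refine .of_dotProduct_mulVec_nonneg
    (isHermitian_entrywiseIntegral (hg.mono fun x hx => hx.1)) fun v => ?_
  rw [dotProduct_entrywiseIntegral_mulVec hint]
  exact integral_nonneg_of_ae (hg.mono fun x hx => hx.dotProduct_mulVec_nonneg v)

lemma posDef_entrywiseIntegral [NeZero μ] {g : α → Matrix n n 𝕜}
    (hg : ∀ x, (g x).PosDef) (hint : ∀ i j, Integrable (fun x => g x i j) μ) :
    (entrywiseIntegral μ g).PosDef := by
  refine .of_dotProduct_mulVec_pos
    (isHermitian_entrywiseIntegral (.of_forall fun x => (hg x).1)) fun v hv => ?_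
  rw [dotProduct_entrywiseIntegral_mulVec hint]
  exact RCLike.integral_pos_of_forall_pos (integrable_dotProduct_mulVec hint v)
    fun x => (hg x).dotProduct_mulVec_pos hv

lemma entrywiseIntegral_mono {g h : α → Matrix n n 𝕜} (hgh : ∀ᵐ x ∂μ, g x ≤ h x)
    (hg : ∀ i j, Integrable (fun x => g x i j) μ) (hh : ∀ i j, Integrable (fun x => h x i j) μ) :
    entrywiseIntegral μ g ≤ entrywiseIntegral μ h := by
  rw [le_iff, ← entrywiseIntegral_sub hh hg]
  exact posSemidef_entrywiseIntegral hgh fun i j => (hh i j).sub (hg i j)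

end Fintype

lemma mul_mul_apply_eq_sum {l o p R : Type*} [Fintype m] [Fintype o] [CommSemiring R]
    (P : Matrix l m R) (M : Matrix m o R) (Q : Matrix o p R) (i : l) (j : p) :
    (P * M * Q) i j = ∑ k, ∑ k', P i k * Q k' j * M k k' := by
  simp only [mul_apply, Finset.sum_mul]
  rw [Finset.sum_comm]
  exact Finset.sum_congr rfl fun _ _ => Finset.sum_congr rfl fun _ _ => by ring

variable [Fintype n] [DecidableEq n] {A X Y : Matrix n n 𝕜}

lemma PosDef.inv_sub_inv_mul_sub_mul_inv_le_inv (hX : X.PosDef) (hY : Y.PosDef) :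
    Y⁻¹ - Y⁻¹ * (X - Y) * Y⁻¹ ≤ X⁻¹ := by
  have hXdet := (isUnit_iff_isUnit_det X).1 hX.isUnit
  have hXinv : X * X⁻¹ = 1 := mul_nonsing_inv X hXdet
  have hinvX : X⁻¹ * X = 1 := nonsing_inv_mul X hXdet
  have hinvY : Y⁻¹ * Y = 1 := nonsing_inv_mul Y ((isUnit_iff_isUnit_det Y).1 hY.isUnit)
  have hsq : X⁻¹ - (Y⁻¹ - Y⁻¹ * (X - Y) * Y⁻¹) = (X⁻¹ - Y⁻¹)ᴴ * X * (X⁻¹ - Y⁻¹) := by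
    rw [conjTranspose_sub, hX.inv.1.eq, hY.inv.1.eq]
    simp only [sub_mul, mul_sub, Matrix.mul_assoc, hXinv, hinvY, hinvX, Matrix.mul_one,
      Matrix.one_mul]
    abel
  rw [le_iff, hsq]
  exact hX.posSemidef.conjTranspose_mul_mul_same _

lemma PosDef.spectrum_pos (hA : A.PosDef) {x : ℝ} (hx : x ∈ spectrum ℝ A) : 0 < x :=
  (isStrictlyPositive_iff_posDef.2 hA).spectrum_pos hx

lemma IsHermitian.cfc_apply_eq_sum (hA : A.IsHermitian) (g : ℝ → ℝ) (i j : n) :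
    cfc g A i j = ∑ k, (hA.eigenvectorUnitary : Matrix n n 𝕜) i k * g (hA.eigenvalues k) *
      star ((hA.eigenvectorUnitary : Matrix n n 𝕜) j k) := by
  rw [hA.cfc_eq, IsHermitian.cfc, Unitary.conjStarAlgAut_apply, mul_apply]
  simp [mul_apply, diagonal_apply, mul_comm]

lemma IsHermitian.integrable_cfc_apply (hA : A.IsHermitian) {g : α → ℝ → ℝ}
    (hg : ∀ x ∈ spectrum ℝ A, Integrable (fun s => g s x) μ) (i j : n) :
    Integrable (fun s => cfc (g s) A i j) μ := by
  simp only [hA.cfc_apply_eq_sum]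
  exact integrable_finsetSum _ fun k _ =>
    (((hg _ (hA.eigenvalues_mem_spectrum_real k)).ofReal (𝕜 := 𝕜)).const_mul _).mul_const _

lemma IsHermitian.integrable_cfc_apply_mul_cfc_apply (hA : A.IsHermitian)
    {g h : α → ℝ → ℝ}
    (hgh : ∀ x ∈ spectrum ℝ A, ∀ y ∈ spectrum ℝ A, Integrable (fun s => g s x * h s y) μ)
    (i j k l : n) : Integrable (fun s => cfc (g s) A i j * cfc (h s) A k l) μ := by
  simp only [hA.cfc_apply_eq_sum, Finset.sum_mul_sum]
  refine integrable_finsetSum _ fun p _ => integrable_finsetSum _ fun q _ => ?_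
  have : Integrable
      (fun s => ((g s (hA.eigenvalues p) * h s (hA.eigenvalues q) : ℝ) : 𝕜)) μ :=
    (hgh _ (hA.eigenvalues_mem_spectrum_real p) _ (hA.eigenvalues_mem_spectrum_real q)).ofReal
  set U : Matrix n n 𝕜 := (hA.eigenvectorUnitary : Matrix n n 𝕜)
  refine (this.const_mul (U i p * star (U j p) * (U k q * star (U l q)))).congr
    (.of_forall fun s => ?_)
  push_cast
  ring

lemma IsHermitian.entrywiseIntegral_cfc (hA : A.IsHermitian) {g : α → ℝ → ℝ}
    (hg : ∀ x ∈ spectrum ℝ A, Integrable (fun s => g s x) μ) :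
    entrywiseIntegral μ (fun s => cfc (g s) A) = cfc (fun x => ∫ s, g s x ∂μ) A := by
  have hk (k : n) : Integrable (fun s => (g s (hA.eigenvalues k) : 𝕜)) μ :=
    (hg _ (hA.eigenvalues_mem_spectrum_real k)).ofReal
  ext i j
  simp only [entrywiseIntegral_apply, hA.cfc_apply_eq_sum]
  refine (integral_finsetSum _ fun k _ => ((hk k).const_mul _).mul_const _).trans ?_
  simp [integral_mul_const, integral_const_mul, integral_ofReal]

lemma IsHermitian.cfc_inv_add (hA : A.IsHermitian) {s : ℝ}
    (hs : ∀ x ∈ spectrum ℝ A, x + s ≠ 0) :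
    cfc (fun x => (x + s)⁻¹) A = (A + s • 1)⁻¹ := by
  rw [cfc_inv (fun x => x + s) A hs, cfc_add_const s (fun x => x) A, cfc_id' ℝ A,
    Algebra.algebraMap_eq_smul_one, nonsing_inv_eq_ringInverse]

lemma PosDef.cfc_inv_add (hA : A.PosDef) {s : ℝ} (hs : 0 ≤ s) :
    cfc (fun x => (x + s)⁻¹) A = (A + s • 1)⁻¹ :=
  hA.isHermitian.cfc_inv_add fun _ hx =>
    (add_pos_of_pos_of_nonneg (hA.spectrum_pos hx) hs).ne'

lemma PosDef.integrableOn_cfc_log_integrand (hA : A.PosDef) (i j : n) :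
    IntegrableOn (fun s => cfc (fun x => (1 + s)⁻¹ - (x + s)⁻¹) A i j) (Ioi (0 : ℝ)) :=
  hA.isHermitian.integrable_cfc_apply (fun _ hx => integrableOn_inv_one_add_sub_inv_add
    (hA.spectrum_pos hx)) i j

lemma PosDef.cfc_log_eq_entrywiseIntegral (hA : A.PosDef) :
    cfc log A = entrywiseIntegral (volume.restrict (Ioi (0 : ℝ)))
      (fun s => cfc (fun x => (1 + s)⁻¹ - (x + s)⁻¹) A) := by
  rw [hA.isHermitian.entrywiseIntegral_cfc fun _ hx => integrableOn_inv_one_add_sub_inv_add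
    (hA.spectrum_pos hx)]
  exact cfc_congr fun x hx => (integral_inv_one_add_sub_inv_add (hA.spectrum_pos hx)).symm

lemma PosDef.integrableOn_inv_add_smul_one_apply_mul_apply (hY : Y.PosDef) (i j k l : n) :
    IntegrableOn (fun s : ℝ => (Y + s • 1)⁻¹ i j * (Y + s • 1)⁻¹ k l) (Ioi 0) := by
  refine (hY.isHermitian.integrable_cfc_apply_mul_cfc_apply (g := fun s x => (x + s)⁻¹)
    (h := fun s x => (x + s)⁻¹) (fun x hx y hy => integrableOn_inv_add_mul_inv_add
      (hY.spectrum_pos hx) (hY.spectrum_pos hy)) i j k l).congr ?_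
  filter_upwards [ae_restrict_mem measurableSet_Ioi] with s (hs : 0 < s)
  rw [hY.cfc_inv_add hs.le]

/-- Differentiating `log Y = ∫₀^∞ ((1 + s)⁻¹ - (Y + s)⁻¹) ds` in `Y` shows that this is the
Fréchet derivative of the matrix logarithm at `Y`, applied to `M`. -/
noncomputable def logDifferential (Y M : Matrix n n 𝕜) : Matrix n n 𝕜 :=
  entrywiseIntegral (volume.restrict (Ioi 0)) fun s : ℝ => (Y + s • 1)⁻¹ * M * (Y + s • 1)⁻¹

@[simp] lemma logDifferential_zero (Y : Matrix n n 𝕜) : logDifferential Y 0 = 0 := by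
  ext i j
  simp [logDifferential]

lemma PosDef.integrableOn_logDifferential_integrand (hY : Y.PosDef) (M : Matrix n n 𝕜)
    (i j : n) :
    IntegrableOn (fun s : ℝ => ((Y + s • 1)⁻¹ * M * (Y + s • 1)⁻¹) i j) (Ioi 0) := by
  simp only [mul_mul_apply_eq_sum]
  exact integrable_finsetSum _ fun p _ => integrable_finsetSum _ fun q _ =>
    (hY.integrableOn_inv_add_smul_one_apply_mul_apply i p q j).mul_const _

lemma PosDef.logDifferential_apply (hY : Y.PosDef) (M : Matrix n n 𝕜) (i j : n) :
    logDifferential Y M i j =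
      ∑ p, ∑ q, (∫ s in Ioi (0 : ℝ), (Y + s • 1)⁻¹ i p * (Y + s • 1)⁻¹ q j) * M p q := by
  simp only [logDifferential, entrywiseIntegral_apply, mul_mul_apply_eq_sum]
  refine (integral_finsetSum _ fun p _ => integrable_finsetSum _ fun q _ =>
    (hY.integrableOn_inv_add_smul_one_apply_mul_apply i p q j).mul_const _).trans ?_
  refine Finset.sum_congr rfl fun p _ => ?_
  refine (integral_finsetSum _ fun q _ =>
    (hY.integrableOn_inv_add_smul_one_apply_mul_apply i p q j).mul_const _).trans ?_
  simp only [integral_mul_const]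

lemma PosDef.integrable_logDifferential_apply (hY : Y.PosDef) {g : α → Matrix n n 𝕜}
    (hg : ∀ i j, Integrable (fun x => g x i j) μ) (i j : n) :
    Integrable (fun x => logDifferential Y (g x) i j) μ := by
  simp only [hY.logDifferential_apply]
  exact integrable_finsetSum _ fun p _ => integrable_finsetSum _ fun q _ =>
    (hg p q).const_mul _

lemma PosDef.entrywiseIntegral_logDifferential (hY : Y.PosDef) {g : α → Matrix n n 𝕜}
    (hg : ∀ i j, Integrable (fun x => g x i j) μ) :
    entrywiseIntegral μ (fun x => logDifferential Y (g x)) =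
      logDifferential Y (entrywiseIntegral μ g) := by
  ext i j
  simp only [entrywiseIntegral_apply, hY.logDifferential_apply]
  rw [integral_finsetSum _ fun p _ => integrable_finsetSum _ fun q _ => (hg p q).const_mul _]
  refine Finset.sum_congr rfl fun p _ => ?_
  rw [integral_finsetSum _ fun q _ => (hg p q).const_mul _]
  simp only [integral_const_mul]

theorem PosDef.cfc_log_le_add_logDifferential (hX : X.PosDef) (hY : Y.PosDef) :
    cfc log X ≤ cfc log Y + logDifferential Y (X - Y) := by
  rw [hX.cfc_log_eq_entrywiseIntegral, hY.cfc_log_eq_entrywiseIntegral,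
    logDifferential, ← entrywiseIntegral_add hY.integrableOn_cfc_log_integrand
      (hY.integrableOn_logDifferential_integrand _)]
  refine entrywiseIntegral_mono ?_ hX.integrableOn_cfc_log_integrand fun i j =>
    (hY.integrableOn_cfc_log_integrand i j).add (hY.integrableOn_logDifferential_integrand _ i j)
  filter_upwards [ae_restrict_mem measurableSet_Ioi] with s (hs : 0 < s)
  have hres {A : Matrix n n 𝕜} (hA : A.PosDef) : cfc (fun x => (1 + s)⁻¹ - (x + s)⁻¹) A =
      algebraMap ℝ _ (1 + s)⁻¹ - (A + s • 1)⁻¹ := by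
    rw [cfc_sub _ _ A (finite_real_spectrum.continuousOn _)
      (finite_real_spectrum.continuousOn _), ← hA.cfc_inv_add hs.le]
    congr 1
    exact cfc_const _ _ hA.isHermitian
  have hs1 : (s • 1 : Matrix n n 𝕜).PosSemidef := PosSemidef.one.smul hs.le
  have htangent := (hX.add_posSemidef hs1).inv_sub_inv_mul_sub_mul_inv_le_inv
    (hY.add_posSemidef hs1)
  rw [add_sub_add_right_eq_sub, le_iff] at htangent
  rw [hres hX, hres hY, le_iff]
  convert htangent using 1
  abel

theorem entrywiseIntegral_cfc_log_le_cfc_log_entrywiseIntegral [IsProbabilityMeasure μ]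
    {f : α → Matrix n n 𝕜} (hf : ∀ x, (f x).PosDef)
    (hint : ∀ i j, Integrable (fun x => f x i j) μ)
    (hlog : ∀ i j, Integrable (fun x => cfc log (f x) i j) μ) :
    entrywiseIntegral μ (fun x => cfc log (f x)) ≤ cfc log (entrywiseIntegral μ f) := by
  set F := entrywiseIntegral μ f
  have hF : F.PosDef := posDef_entrywiseIntegral hf hint
  have hconst (M : Matrix n n 𝕜) (i j : n) : Integrable (fun _ : α => M i j) μ :=
    integrable_const _
  have hdev (i j : n) : Integrable (fun x => (f x - F) i j) μ := (hint i j).sub (hconst F i j)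
  calc entrywiseIntegral μ (fun x => cfc log (f x))
      ≤ entrywiseIntegral μ (fun x => cfc log F + logDifferential F (f x - F)) :=
        entrywiseIntegral_mono (.of_forall fun x => (hf x).cfc_log_le_add_logDifferential hF)
          hlog fun i j => (hconst _ i j).add (hF.integrable_logDifferential_apply hdev i j)
    _ = cfc log F := by
        rw [entrywiseIntegral_add (hconst _) (hF.integrable_logDifferential_apply hdev),
          entrywiseIntegral_const, hF.entrywiseIntegral_logDifferential hdev,
          entrywiseIntegral_sub hint (hconst F), entrywiseIntegral_const, sub_self,
          logDifferential_zero, add_zero]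

end Matrix

lemma matLog_eq_cfc {ℓ : ℕ} {A : Matrix (Fin ℓ) (Fin ℓ) ℂ} (hA : A.IsHermitian) :
    matLog hA = cfc Real.log A := by
  rw [hA.cfc_eq, Matrix.IsHermitian.cfc, Unitary.conjStarAlgAut_apply]
  rfl

theorem matrix_jensen_log_general {ℓ : ℕ}
    (f : ℝ → Matrix (Fin ℓ) (Fin ℓ) ℂ)
    (hf : ∀ θ, (f θ).PosDef)
    (hint : ∀ i j, IntegrableOn (fun θ => f θ i j) (Set.Ico 0 (2 * Real.pi)))
    (hlogint : ∀ i j,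
      IntegrableOn (fun θ => matLog (hf θ).1 i j) (Set.Ico 0 (2 * Real.pi))) :
    ∃ hF : (Matrix.of fun i j =>
        ((2 * Real.pi)⁻¹ : ℝ) • ∫ θ in Set.Ico 0 (2 * Real.pi), f θ i j).PosDef,
      (matLog hF.1 -
        Matrix.of fun i j =>
          ((2 * Real.pi)⁻¹ : ℝ) •
            ∫ θ in Set.Ico 0 (2 * Real.pi), matLog (hf θ).1 i j).PosSemidef := by
  let μ := ProbabilityTheory.cond volume (Ico (0 : ℝ) (2 * π))
  have hvol : volume (Ico (0 : ℝ) (2 * π)) ≠ 0 := by simp [pi_pos]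
  have : IsProbabilityMeasure μ :=
    ProbabilityTheory.cond_isProbabilityMeasure_of_finite hvol measure_Ico_lt_top.ne
  have hμ (g : ℝ → Matrix (Fin ℓ) (Fin ℓ) ℂ) : (Matrix.of fun i j =>
      ((2 * π)⁻¹ : ℝ) • ∫ θ in Ico 0 (2 * π), g θ i j) = Matrix.entrywiseIntegral μ g := by
    rw [Matrix.entrywiseIntegral_cond, volume_real_Ico_of_le two_pi_pos.le, sub_zero]
  simp only [matLog_eq_cfc, hμ] at hlogint ⊢
  exact ⟨Matrix.posDef_entrywiseIntegral hf fun i j => (hint i j).integrable_cond hvol,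
    Matrix.entrywiseIntegral_cfc_log_le_cfc_log_entrywiseIntegral hf
      (fun i j => (hint i j).integrable_cond hvol)
      fun i j => (hlogint i j).integrable_cond hvol⟩

/-- (Matrix Jensen inequality for the logarithm.) If `f` takes Hermitian positive
definite values and both `f` and `log ∘ f` are entrywise integrable on `[0,2π)` with
respect to `dθ/(2π)`, then `F = ∫ f dθ/2π` is Hermitian positive definite and
`∫ log f dθ/2π ⪯ log F`. -/
theorem matrix_jensen_log {ℓ : ℕ}
    (f : ℝ → Matrix (Fin ℓ) (Fin ℓ) ℂ)
    (hf : ∀ θ, (f θ).PosDef)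
    (hmeas : ∀ i j, Measurable fun θ => f θ i j)
    (hint : ∀ i j, IntegrableOn (fun θ => f θ i j) (Set.Ico 0 (2 * Real.pi)))
    (hlogint : ∀ i j,
      IntegrableOn (fun θ => matLog (hf θ).1 i j) (Set.Ico 0 (2 * Real.pi))) :
    ∃ hF : (Matrix.of fun i j =>
        ((2 * Real.pi)⁻¹ : ℝ) • ∫ θ in Set.Ico 0 (2 * Real.pi), f θ i j).PosDef,
      (matLog hF.1 -
        Matrix.of fun i j =>
          ((2 * Real.pi)⁻¹ : ℝ) •
            ∫ θ in Set.Ico 0 (2 * Real.pi), matLog (hf θ).1 i j).PosSemidef :=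
  matrix_jensen_log_general f hf hint hlogint
end

section
/- Let P be an ℓ×ℓ matrix polynomial (a polynomial in z with coefficients in M_ℓ(ℂ)) such that det P(z) ≠ 0 for every z ∈ ℂ with |z| ≤ 1. Then ∫_0^{2π} log det(P(e^{iθ})† P(e^{iθ})) dθ/(2π) = 2·log |det P(0)|, where det(P(e^{iθ})† P(e^{iθ})) = |det P(e^{iθ})|² is a positive real number for each θ. -/
/-! Since `det P(z)` is the polynomial `det P` evaluated at `z`, the function
`log |det P(z)|` is harmonic on a neighbourhood of the closed unit disc, where `det P` has no
zeros. Its mean over the unit circle is therefore its value at the centre, `log |det P(0)|`. -/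

open Matrix MeasureTheory Polynomial Metric Real

theorem Matrix.det_map_eval {n R : Type*} [Fintype n] [DecidableEq n] [CommRing R]
    (P : Matrix n n R[X]) (z : R) : (P.map (eval z)).det = P.det.eval z :=
  (RingHom.map_det (evalRingHom z) P).symm

theorem Matrix.det_conjTranspose_mul_self {n 𝕜 : Type*} [Fintype n] [DecidableEq n] [RCLike 𝕜]
    (A : Matrix n n 𝕜) : (Aᴴ * A).det = ((‖A.det‖ ^ 2 : ℝ) : 𝕜) := by
  rw [det_mul, det_conjTranspose, RCLike.star_def, RCLike.conj_mul, RCLike.ofReal_pow]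

theorem Polynomial.circleAverage_log_norm_eval_of_ne_zero {p : ℂ[X]} {c : ℂ} {R : ℝ}
    (hp : ∀ z ∈ closedBall c |R|, p.eval z ≠ 0) :
    circleAverage (fun z ↦ log ‖p.eval z‖) c R = log ‖p.eval c‖ :=
  ((AnalyticOnNhd.eval_polynomial p).mono (Set.subset_univ _)).circleAverage_log_norm_of_ne_zero hp

theorem circleAverage_zero_one_eq_setIntegral_Ico (f : ℂ → ℝ) :
    circleAverage f 0 1 =
      (2 * π)⁻¹ * ∫ θ in Set.Ico 0 (2 * π), f (Complex.exp (θ * Complex.I)) := by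
  rw [circleAverage_def, smul_eq_mul, intervalIntegral.integral_of_le two_pi_pos.le,
    setIntegral_congr_set Ico_ae_eq_Ioc]
  simp [circleMap_zero]

/-- If `P` is an `ℓ×ℓ` matrix polynomial with `det P(z) ≠ 0` throughout the closed unit
disc, then `∫₀^{2π} log det(P(e^{iθ})† P(e^{iθ})) dθ/2π = 2 log |det P(0)|`,
where `det(P(e^{iθ})† P(e^{iθ})) = |det P(e^{iθ})|²` is a positive real number. -/
theorem mean_log_det_modulus {ℓ : ℕ}
    (P : Matrix (Fin ℓ) (Fin ℓ) (Polynomial ℂ))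
    (hP : ∀ z : ℂ, ‖z‖ ≤ 1 → (P.map (Polynomial.eval z)).det ≠ 0) :
    (∀ θ : ℝ,
      ((P.map (Polynomial.eval (Complex.exp (θ * Complex.I))))ᴴ *
          P.map (Polynomial.eval (Complex.exp (θ * Complex.I)))).det =
        ((‖(P.map (Polynomial.eval (Complex.exp (θ * Complex.I)))).det‖ ^ 2 : ℝ) : ℂ) ∧
      0 < ‖(P.map (Polynomial.eval (Complex.exp (θ * Complex.I)))).det‖ ^ 2) ∧
    ((2 * Real.pi)⁻¹ : ℝ) * ∫ θ in Set.Ico 0 (2 * Real.pi),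
        Real.log (‖(P.map (Polynomial.eval (Complex.exp (θ * Complex.I)))).det‖ ^ 2) =
      2 * Real.log (‖(P.map (Polynomial.eval 0)).det‖) := by
  have hdet : ∀ z ∈ closedBall (0 : ℂ) |1|, P.det.eval z ≠ 0 := fun z hz ↦ by
    rw [← det_map_eval]
    exact hP z (by simpa using hz)
  refine ⟨fun θ ↦ ⟨det_conjTranspose_mul_self _, ?_⟩, ?_⟩
  · exact pow_pos (norm_pos_iff.mpr (hP _ (by simp [Complex.norm_exp]))) 2
  · simp only [det_map_eval, Real.log_pow, Nat.cast_ofNat]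
    rw [integral_const_mul, mul_left_comm,
      ← circleAverage_zero_one_eq_setIntegral_Ico (fun z ↦ log ‖P.det.eval z‖),
      circleAverage_log_norm_eval_of_ne_zero hdet]
end

section
/- Let α ∈ M_ℓ(ℂ) with ‖α‖ < 1, and set ρ^L = (1 − α†α)^{1/2} and ρ^R = (1 − αα†)^{1/2} (the positive semidefinite square roots, which are invertible). Then the 2ℓ×2ℓ block matrix A^L(α,z) = [[z(ρ^L)^{-1}, −(ρ^L)^{-1}α†], [−z(ρ^R)^{-1}α, (ρ^R)^{-1}]] satisfies det A^L(α,z) = z^ℓ for every z ∈ ℂ. -/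
/-!
The block matrix factors as `diag((ρᴸ)⁻¹, (ρᴿ)⁻¹) · [[1, -α†], [-α, 1]] · diag(z, 1)`, and the
middle factor has determinant `det (1 - α†α) = det (ρᴸ)²`. By the Weinstein–Aronszajn identity
`det (1 - α†α) = det (1 - αα†)`, so the positive square roots satisfy `det ρᴸ = det ρᴿ`, and
everything cancels except `z^ℓ`. The C⋆-identity `‖α†α‖ = ‖αα†‖ = ‖α‖² < 1` makes `1 - α†α` and
`1 - αα†`, hence `ρᴸ` and `ρᴿ`, invertible.
-/

open Matrix
open scoped ComplexOrder

/-- The operator norm of a matrix, induced by the Euclidean norm on `ℂ^ℓ`. -/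
noncomputable def opNorm {ℓ : ℕ} (M : Matrix (Fin ℓ) (Fin ℓ) ℂ) : ℝ :=
  ‖Matrix.toEuclideanCLM (𝕜 := ℂ) M‖

/-- The positive semidefinite square root of a positive semidefinite matrix
(the definition `Matrix.PosSemidef.sqrt` of the older Mathlib, since removed). -/
noncomputable def Matrix.PosSemidef.sqrt {n : Type*} [Fintype n] [DecidableEq n] {𝕜 : Type*}
    [RCLike 𝕜] {A : Matrix n n 𝕜} (hA : A.PosSemidef) : Matrix n n 𝕜 :=
  hA.1.eigenvectorUnitary.1 * diagonal ((↑) ∘ (√·) ∘ hA.1.eigenvalues) *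
  (star hA.1.eigenvectorUnitary : Matrix n n 𝕜)

namespace Matrix.PosSemidef

variable {n 𝕜 : Type*} [Fintype n] [DecidableEq n] [RCLike 𝕜]

open scoped MatrixOrder

lemma sqrt_eq_cfcSqrt {A : Matrix n n 𝕜} (hA : A.PosSemidef) : hA.sqrt = CFC.sqrt A := by
  rw [CFC.sqrt_eq_real_sqrt A hA.nonneg, cfcₙ_eq_cfc, hA.1.cfc_eq, IsHermitian.cfc,
    Unitary.conjStarAlgAut_apply]
  rfl

lemma sqrt_mul_self {A : Matrix n n 𝕜} (hA : A.PosSemidef) : hA.sqrt * hA.sqrt = A := by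
  rw [hA.sqrt_eq_cfcSqrt, CFC.sqrt_mul_sqrt_self A hA.nonneg]

lemma det_sqrt_eq_of_det_eq {m : Type*} [Fintype m] [DecidableEq m] {A : Matrix n n 𝕜}
    {B : Matrix m m 𝕜} (hA : A.PosSemidef) (hB : B.PosSemidef) (h : A.det = B.det) :
    hA.sqrt.det = hB.sqrt.det := by
  rw [hA.sqrt_eq_cfcSqrt, hB.sqrt_eq_cfcSqrt, hA.det_sqrt, hB.det_sqrt, h]

end Matrix.PosSemidef

section CStarRing

variable {A : Type*} [NormedRing A] [StarRing A] [CStarRing A] [HasSummableGeomSeries A] {a : A}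

lemma isUnit_one_sub_star_mul_self (h : ‖a‖ < 1) : IsUnit (1 - star a * a) :=
  isUnit_one_sub_of_norm_lt_one <| by
    rw [CStarRing.norm_star_mul_self]
    exact mul_lt_one_of_nonneg_of_lt_one_left (norm_nonneg a) h h.le

lemma isUnit_one_sub_mul_star_self (h : ‖a‖ < 1) : IsUnit (1 - a * star a) := by
  simpa using isUnit_one_sub_star_mul_self (a := star a) (by rwa [norm_star])

end CStarRing

theorem Matrix.det_fromBlocks_smul_neg_mul {m n R : Type*} [Fintype m] [Fintype n]
    [DecidableEq m] [DecidableEq n] [CommRing R] (P : Matrix m m R) (Q : Matrix n n R)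
    (a : Matrix n m R) (b : Matrix m n R) (z : R) :
    (fromBlocks (z • P) (-(P * b)) (-(z • (Q * a))) Q).det =
      z ^ Fintype.card m * P.det * Q.det * (1 - b * a).det := by
  have hfactor : fromBlocks (z • P) (-(P * b)) (-(z • (Q * a))) Q =
      fromBlocks P 0 0 Q * fromBlocks 1 (-b) (-a) 1 * fromBlocks (z • 1) 0 0 1 := by
    simp [fromBlocks_multiply]
  rw [hfactor, det_mul, det_mul, det_fromBlocks_zero₂₁, det_fromBlocks_zero₂₁, det_fromBlocks_one₂₂,
    det_smul, det_one, det_one, Matrix.neg_mul, Matrix.mul_neg, neg_neg]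
  ring

/-- For a strict contraction `α`, with `ρ^L = (1 - α†α)^{1/2}` and
`ρ^R = (1 - αα†)^{1/2}` (positive semidefinite square roots, which are invertible),
the block matrix `A^L(α,z) = [[z(ρ^L)⁻¹, -(ρ^L)⁻¹α†], [-z(ρ^R)⁻¹α, (ρ^R)⁻¹]]`
has determinant `z^ℓ` for every `z ∈ ℂ`. -/
theorem det_szegoe_transfer_matrix {ℓ : ℕ}
    (α : Matrix (Fin ℓ) (Fin ℓ) ℂ) (hα : opNorm α < 1)
    (h1 : (1 - αᴴ * α).PosSemidef) (h2 : (1 - α * αᴴ).PosSemidef) :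
    IsUnit h1.sqrt ∧ IsUnit h2.sqrt ∧
    ∀ z : ℂ,
      (Matrix.fromBlocks
        (z • h1.sqrt⁻¹) (-(h1.sqrt⁻¹ * αᴴ))
        (-(z • (h2.sqrt⁻¹ * α))) h2.sqrt⁻¹).det = z ^ ℓ := by
  -- `opNorm α` is by definition the norm of `α` in Mathlib's C⋆-algebra structure on matrices.
  have hunit₁ : IsUnit (1 - αᴴ * α) := by
    open scoped Matrix.Norms.L2Operator in exact isUnit_one_sub_star_mul_self hα
  have hunit₂ : IsUnit (1 - α * αᴴ) := by
    open scoped Matrix.Norms.L2Operator in exact isUnit_one_sub_mul_star_self hα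
  have hρL : IsUnit h1.sqrt := isUnit_of_mul_isUnit_left (h1.sqrt_mul_self ▸ hunit₁)
  have hρR : IsUnit h2.sqrt := isUnit_of_mul_isUnit_left (h2.sqrt_mul_self ▸ hunit₂)
  have hdet : h1.sqrt.det = h2.sqrt.det :=
    h1.det_sqrt_eq_of_det_eq h2 (det_one_sub_mul_comm αᴴ α)
  refine ⟨hρL, hρR, fun z => ?_⟩
  have hdet_one_sub : (1 - αᴴ * α).det = h1.sqrt.det * h2.sqrt.det := by
    rw [← hdet, ← det_mul, h1.sqrt_mul_self]
  have hdet_ne : h2.sqrt.det ≠ 0 := ((isUnit_iff_isUnit_det _).mp hρR).ne_zero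
  rw [det_fromBlocks_smul_neg_mul, hdet_one_sub, det_nonsing_inv, det_nonsing_inv,
    Fintype.card_fin, hdet, Ring.inverse_eq_inv']
  field_simp
end
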